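/- arXiv:1306.2595 — 3 statements merged into one kernel-verified Lean document; each statement's English description precedes it below -/
import Mathlib

section
/- For any x in (0,1], the integral from 0 to 1 of log2(x⁻¹ - z) dz equals x⁻¹·H(x) - log2(e), where H is the binary entropy function. -/
open Real MeasureTheory

noncomputable def binEnt (p : ℝ) : ℝ :=
  -(p * Real.logb 2 p) - (1 - p) * Real.logb 2 (1 - p)

/-! Substituting `u = x⁻¹ - z` turns the integral into `∫ u in x⁻¹ - 1..x⁻¹, log u / log 2`, which the
antiderivative `u log u - u` evaluates; since `x⁻¹ - 1 = (1 - x) x⁻¹`, the boundary terms regroup into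
`x⁻¹ H(x) / log 2`, and the remaining `-1 / log 2` is `-log₂ e`. -/

theorem integral_log_sub_zero_one (a : ℝ) :
    ∫ z in (0:ℝ)..1, log (a - z) = a * log a - (a - 1) * log (a - 1) - 1 := by
  rw [intervalIntegral.integral_comp_sub_left (fun u => log u), sub_zero, integral_log]
  ring

theorem integral_logb_sub_zero_one (b a : ℝ) :
    ∫ z in (0:ℝ)..1, logb b (a - z) = (a * log a - (a - 1) * log (a - 1) - 1) / log b := by
  simp only [logb]
  rw [intervalIntegral.integral_div, integral_log_sub_zero_one]

theorem inv_mul_binEnt {x : ℝ} (hx : x ≠ 0) :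
    x⁻¹ * binEnt x = (x⁻¹ * log x⁻¹ - (x⁻¹ - 1) * log (x⁻¹ - 1)) / log 2 := by
  by_cases h1x : 1 - x = 0
  · obtain rfl : x = 1 := by linarith
    simp [binEnt]
  have hsplit : x⁻¹ - 1 = (1 - x) * x⁻¹ := by field_simp
  rw [hsplit, log_mul h1x (inv_ne_zero hx), log_inv]
  simp only [binEnt, logb]
  field_simp
  ring

theorem integral_log_inv_sub_eq (x : ℝ) (hx : x ∈ Set.Ioc (0:ℝ) 1) :
    ∫ z in (0:ℝ)..1, Real.logb 2 (x⁻¹ - z)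
      = x⁻¹ * binEnt x - Real.logb 2 (Real.exp 1) := by
  rw [integral_logb_sub_zero_one, inv_mul_binEnt hx.1.ne', logb, log_exp]
  ring
end

section
/- For β in (0,1), lim_{x→β} ∫₀ˣ log2((1-t)/(1-t/x)) dt = (β-1)·log2(1-β). Equivalently, ∫₀^β log2((1-t)/(1-t/β)) dt = (β-1)·log2(1-β) = H(β) + β·log2(β), where H is the binary entropy function. -/
open Real MeasureTheory Filter

/-!
Splitting the logarithm of the quotient, the integral becomes
`∫₀ˣ log (1 - t) dt - ∫₀ˣ log (1 - t/x) dt`. The first is `(x - 1) log (1 - x) - x`, and the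
substitution `u = t/x` turns the second into `x ∫₀¹ log (1 - u) du = -x`. The closed form
`(x - 1) logb 2 (1 - x)` is continuous in `x`, which gives the limit.
Since `Real.log` is `log |·|`, all of these identities hold for every real `x`.
-/

open intervalIntegral

lemma intervalIntegrable_log_one_sub (a b : ℝ) :
    IntervalIntegrable (fun t => log (1 - t)) volume a b := by
  simpa using (intervalIntegrable_log' (a := 1 - a) (b := 1 - b)).comp_sub_left 1

lemma intervalIntegrable_log_one_sub_div (a b c : ℝ) :
    IntervalIntegrable (fun t => log (1 - t / c)) volume a b := by
  rcases eq_or_ne c 0 with rfl | hc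
  · simp
  simpa [div_eq_mul_inv, hc] using
    (intervalIntegrable_log_one_sub (a / c) (b / c)).comp_mul_right (c := c⁻¹)

lemma integral_log_one_sub (x : ℝ) :
    ∫ t in (0 : ℝ)..x, log (1 - t) = (x - 1) * log (1 - x) - x := by
  rw [integral_comp_sub_left (fun u => log u) 1, sub_zero, integral_log]
  simp only [log_one, mul_zero]
  ring

lemma integral_log_one_sub_div_self (x : ℝ) :
    ∫ t in (0 : ℝ)..x, log (1 - t / x) = -x := by
  rcases eq_or_ne x 0 with rfl | hx
  · simp
  rw [integral_comp_div (fun u => log (1 - u)) hx, zero_div, div_self hx, integral_log_one_sub]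
  simp

theorem integral_logb_one_sub_div_one_sub_div_self (x : ℝ) :
    ∫ t in (0 : ℝ)..x, logb 2 ((1 - t) / (1 - t / x)) = (x - 1) * logb 2 (1 - x) := by
  rcases eq_or_ne x 0 with rfl | hx
  · simp
  have h_integrand : ∀ᵐ t, t ∈ Set.uIoc 0 x →
      logb 2 ((1 - t) / (1 - t / x)) = (log (1 - t) - log (1 - t / x)) / log 2 := by
    filter_upwards [(Set.toFinite {1, x}).countable.ae_notMem volume] with t ht _
    simp only [Set.mem_insert_iff, Set.mem_singleton_iff, not_or] at ht
    have h_num : 1 - t ≠ 0 := sub_ne_zero.2 (Ne.symm ht.1)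
    have h_den : 1 - t / x ≠ 0 := sub_ne_zero.2 (Ne.symm (mt (div_eq_one_iff_eq hx).1 ht.2))
    rw [logb, log_div h_num h_den]
  rw [integral_congr_ae h_integrand, intervalIntegral.integral_div,
    integral_sub (intervalIntegrable_log_one_sub 0 x) (intervalIntegrable_log_one_sub_div 0 x x),
    integral_log_one_sub, integral_log_one_sub_div_self, logb]
  ring

lemma continuous_sub_one_mul_logb_one_sub :
    Continuous fun x : ℝ => (x - 1) * logb 2 (1 - x) := by
  convert (continuous_mul_log.comp (continuous_sub_left 1)).neg.div_const (log 2) using 1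
  ext x
  simp only [Pi.neg_apply, Function.comp_apply, logb]
  ring

theorem deviation_iid_example_general (β : ℝ) :
    Tendsto (fun x : ℝ => ∫ t in (0:ℝ)..x, Real.logb 2 ((1 - t) / (1 - t / x)))
        (nhds β) (nhds ((β - 1) * Real.logb 2 (1 - β)))
    ∧ (∫ t in (0:ℝ)..β, Real.logb 2 ((1 - t) / (1 - t / β)))
        = (β - 1) * Real.logb 2 (1 - β)
    ∧ (β - 1) * Real.logb 2 (1 - β) = binEnt β + β * Real.logb 2 β := by
  refine ⟨?_, integral_logb_one_sub_div_one_sub_div_self β, by rw [binEnt]; ring⟩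
  simp_rw [integral_logb_one_sub_div_one_sub_div_self]
  exact continuous_sub_one_mul_logb_one_sub.tendsto β

theorem deviation_iid_example (β : ℝ) (hβ : β ∈ Set.Ioo (0:ℝ) 1) :
    Tendsto (fun x : ℝ => ∫ t in (0:ℝ)..x, Real.logb 2 ((1 - t) / (1 - t / x)))
        (nhds β) (nhds ((β - 1) * Real.logb 2 (1 - β)))
    ∧ (∫ t in (0:ℝ)..β, Real.logb 2 ((1 - t) / (1 - t / β)))
        = (β - 1) * Real.logb 2 (1 - β)
    ∧ (β - 1) * Real.logb 2 (1 - β) = binEnt β + β * Real.logb 2 β :=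
  deviation_iid_example_general β
end

section
/- Define the loss function L(β) = H(φ)/φ - (β/φ)·H(φ/β) for β ∈ [φ, 1], with fixed φ ∈ (0,1]. Then L is monotonically decreasing in β, L(1) = 0, and L(β) ≥ 0 for all β ∈ [φ,1]. -/
/-!
With `f x = x log x` one has `β H(φ/β) = (f β - f (β - φ) - f φ) / log 2`.
Since `f` is convex, its increments `f (x + φ) - f x` over a window of fixed width `φ` grow with
`x`, so `β H(φ/β)` is monotone and `L` is antitone; `L(1) = 0` then gives `L ≥ 0` on `[φ, 1]`.
-/

open Real

theorem ConvexOn.map_add_sub_map_le {𝕜 : Type*} [Field 𝕜] [LinearOrder 𝕜]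
    [IsStrictOrderedRing 𝕜] {s : Set 𝕜} {f : 𝕜 → 𝕜} (hf : ConvexOn 𝕜 s f) {a b d : 𝕜}
    (ha : a ∈ s) (hbd : b + d ∈ s) (hab : a ≤ b) (hd : 0 ≤ d) :
    f (a + d) - f a ≤ f (b + d) - f b := by
  rcases hd.eq_or_lt with rfl | hd
  · simp
  rcases hab.eq_or_lt with rfl | hab
  · rfl
  have had : a + d ∈ s := hf.1.ordConnected.out ha hbd ⟨by linarith, by linarith⟩
  have hb : b ∈ s := hf.1.ordConnected.out ha hbd ⟨hab.le, by linarith⟩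
  have hslopes : (f (a + d) - f a) / d ≤ (f (b + d) - f b) / d :=
    calc (f (a + d) - f a) / d = (f (a + d) - f a) / (a + d - a) := by rw [add_sub_cancel_left]
      _ ≤ (f (b + d) - f a) / (b + d - a) :=
          hf.secant_mono ha had hbd (by linarith) (by linarith) (by linarith)
      _ = (f a - f (b + d)) / (a - (b + d)) := by rw [← neg_div_neg_eq]; congr 1 <;> ring
      _ ≤ (f b - f (b + d)) / (b - (b + d)) :=
          hf.secant_mono hbd ha hb (by linarith) (by linarith) hab.le
      _ = (f (b + d) - f b) / d := by rw [← neg_div_neg_eq]; congr 1 <;> ring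
  exact (div_le_div_iff_of_pos_right hd).mp hslopes

theorem mul_binEnt_div {φ β : ℝ} (hφ : 0 < φ) (hφβ : φ ≤ β) :
    β * binEnt (φ / β) =
      (β * log β - (β - φ) * log (β - φ) - φ * log φ) / log 2 := by
  have hβ : 0 < β := hφ.trans_le hφβ
  rcases hφβ.eq_or_lt with rfl | hφβ
  · simp [binEnt, div_self hβ.ne']
  have hcompl : 1 - φ / β = (β - φ) / β := by field_simp
  simp only [binEnt, logb, hcompl]
  rw [log_div hφ.ne' hβ.ne', log_div (sub_pos.2 hφβ).ne' hβ.ne']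
  field_simp
  ring

theorem monotoneOn_mul_binEnt_div {φ : ℝ} (hφ : 0 < φ) :
    MonotoneOn (fun β => β * binEnt (φ / β)) (Set.Ici φ) := by
  intro x hx y hy hxy
  simp only [mul_binEnt_div hφ hx, mul_binEnt_div hφ hy]
  have hinc := convexOn_mul_log.map_add_sub_map_le (a := x - φ) (b := y - φ) (d := φ)
    (Set.mem_Ici.2 (sub_nonneg.2 hx))
    (Set.mem_Ici.2 (by linarith [Set.mem_Ici.1 hy])) (by linarith) hφ.le
  simp only [sub_add_cancel] at hinc
  exact div_le_div_of_nonneg_right (by linarith) (log_pos one_lt_two).le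

theorem loss_monotone_nonneg (φ : ℝ) (hφ : φ ∈ Set.Ioc (0:ℝ) 1) :
    AntitoneOn (fun β : ℝ => binEnt φ / φ - (β / φ) * binEnt (φ / β)) (Set.Icc φ 1)
    ∧ binEnt φ / φ - (1 / φ) * binEnt (φ / 1) = 0
    ∧ ∀ β ∈ Set.Icc φ 1, 0 ≤ binEnt φ / φ - (β / φ) * binEnt (φ / β) := by
  have hanti : AntitoneOn (fun β : ℝ => binEnt φ / φ - (β / φ) * binEnt (φ / β))
      (Set.Icc φ 1) := by
    intro x hx y hy hxy
    have hle := monotoneOn_mul_binEnt_div hφ.1 hx.1 hy.1 hxy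
    simp only [div_mul_eq_mul_div]
    exact sub_le_sub_left (div_le_div_of_nonneg_right hle hφ.1.le) _
  have hone : binEnt φ / φ - (1 / φ) * binEnt (φ / 1) = 0 := by
    rw [div_one, one_div, inv_mul_eq_div, sub_self]
  refine ⟨hanti, hone, fun β hβ => ?_⟩
  calc (0 : ℝ) = binEnt φ / φ - (1 / φ) * binEnt (φ / 1) := hone.symm
    _ ≤ binEnt φ / φ - (β / φ) * binEnt (φ / β) :=
      hanti hβ ⟨hβ.1.trans hβ.2, le_rfl⟩ hβ.2
end
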